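/- arXiv:2004.05076 — 2 statements merged into one kernel-verified Lean document; each statement's English description precedes it below -/
import Mathlib

section
/- Consider a random-order stream of m distinct-rank elements processed by the randomized TOP N matrix algorithm with d rows and w columns, where each element is assigned to a uniformly random row and each row retains its w largest elements seen so far, passing (not pruning) an element only if it is among the w largest elements mapped to its row so far. Then the expected number of elements that are not pruned is at most w·d·ln(m·e/(w·d)), assuming m ≥ w·d. -/
/-!
Given its row loads, the expected number of unpruned elements in a row receiving `M` elements is
`∑_{j ≤ M} min (w / j) 1`, which is `M` for `M ≤ w` and at most `w (1 + log (M / w))` otherwise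
(the harmonic tail against `∫ dx / x`). Bounding `log` by its tangent at the average load
`c = m / d` turns this into `w log (c / w) + (w / c) M`, which is linear in `M`; summing over the
rows, the loads add up to `m`, so every assignment of elements to rows gives at most
`w d log (c / w) + w d = w d log (m e / (w d))`, and hence so does the expectation.
-/

open Finset Real

lemma PMF.sum_toReal_eq_one {α : Type*} [Fintype α] (p : PMF α) : ∑ a, (p a).toReal = 1 := by
  rw [← ENNReal.toReal_sum (fun a _ => p.apply_ne_top a), ← tsum_fintype (L := .unconditional _),
    p.tsum_coe, ENNReal.toReal_one]

lemma PMF.sum_toReal_mul_le {α : Type*} [Fintype α] (p : PMF α) {f : α → ℝ} {B : ℝ}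
    (hf : ∀ a, f a ≤ B) : ∑ a, (p a).toReal * f a ≤ B :=
  calc ∑ a, (p a).toReal * f a ≤ ∑ a, (p a).toReal * B :=
        sum_le_sum fun a _ => mul_le_mul_of_nonneg_left (hf a) ENNReal.toReal_nonneg
    _ = B := by rw [← sum_mul, p.sum_toReal_eq_one, one_mul]

lemma sum_Ico_inv_succ_le_log {a b : ℕ} (ha : 0 < a) (hab : a ≤ b) :
    ∑ i ∈ Ico a b, ((i + 1 : ℕ) : ℝ)⁻¹ ≤ log (b / a) := by
  have ha' : (0 : ℝ) < a := by exact_mod_cast ha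
  calc _ ≤ ∫ x in (a : ℝ)..b, x⁻¹ := (inv_antitoneOn_Icc_right ha').sum_le_integral_Ico hab
    _ = log (b / a) := integral_inv_of_pos ha' (by exact_mod_cast ha.trans_le hab)

/-- Expected number of unpruned elements in a row receiving `M` elements: in a random order the
`j`-th of them is among the `w` largest seen so far with probability `min (w / j) 1`. -/
noncomputable def expectedUnpruned (w M : ℕ) : ℝ := ∑ j ∈ Icc 1 M, min ((w : ℝ) / j) 1

lemma expectedUnpruned_eq_sum_range (w M : ℕ) :
    expectedUnpruned w M = ∑ i ∈ range M, min ((w : ℝ) / (i + 1 : ℕ)) 1 := by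
  rw [expectedUnpruned, range_eq_Ico, sum_Ico_add' (fun j : ℕ => min ((w : ℝ) / j) 1) 0 M 1,
    zero_add, Ico_add_one_right_eq_Icc]

lemma expectedUnpruned_of_le {w M : ℕ} (h : M ≤ w) : expectedUnpruned w M = M := by
  rw [expectedUnpruned_eq_sum_range]
  refine (sum_congr rfl fun i hi => min_eq_right ?_).trans (by simp)
  rw [one_le_div (by positivity)]
  exact_mod_cast (mem_range.mp hi).trans_le h

lemma expectedUnpruned_le_of_le {w M : ℕ} (hw : 0 < w) (h : w ≤ M) :
    expectedUnpruned w M ≤ w * (1 + log (M / w)) := by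
  rw [expectedUnpruned_eq_sum_range, ← sum_range_add_sum_Ico _ h, ← expectedUnpruned_eq_sum_range,
    expectedUnpruned_of_le le_rfl, mul_one_add]
  gcongr
  calc ∑ i ∈ Ico w M, min ((w : ℝ) / (i + 1 : ℕ)) 1
      ≤ ∑ i ∈ Ico w M, w * ((i + 1 : ℕ) : ℝ)⁻¹ := sum_le_sum fun i _ => min_le_left _ _
    _ ≤ w * log (M / w) := by rw [← mul_sum]; gcongr; exact sum_Ico_inv_succ_le_log hw h

/-- Tangent-line bound at `c`: it is linear in `M`, so it survives summing over the rows. -/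
lemma expectedUnpruned_le {w M : ℕ} {c : ℝ} (hw : 0 < w) (hc : w ≤ c) :
    expectedUnpruned w M ≤ w * log (c / w) + w / c * M := by
  have hw' : (0 : ℝ) < w := by exact_mod_cast hw
  have hc0 : 0 < c := hw'.trans_le hc
  rcases le_total M w with hMw | hwM
  · have hMw' : (M : ℝ) ≤ w := by exact_mod_cast hMw
    have hshrink : w / c * (w - M) ≤ w - M :=
      mul_le_of_le_one_left (sub_nonneg.2 hMw') ((div_le_one hc0).2 hc)
    have hlog : 1 - w / c ≤ log (c / w) := by
      rw [← inv_div]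
      exact one_sub_inv_le_log_of_pos (by positivity)
    rw [expectedUnpruned_of_le hMw]
    calc (M : ℝ) ≤ w * (1 - w / c) + w / c * M := by linarith
      _ ≤ w * log (c / w) + w / c * M := by gcongr
  · have hM : (0 : ℝ) < M := by exact_mod_cast hw.trans_le hwM
    have hlog : log (M / w) ≤ log (c / w) + (M / c - 1) := by
      rw [show (M : ℝ) / w = (c / w) * (M / c) by field_simp, log_mul (by positivity) (by positivity)]
      linarith [log_le_sub_one_of_pos (div_pos hM hc0)]
    calc expectedUnpruned w M ≤ w * (1 + log (M / w)) := expectedUnpruned_le_of_le hw hwM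
      _ ≤ w * (1 + (log (c / w) + (M / c - 1))) := by gcongr
      _ = w * log (c / w) + w / c * M := by ring

lemma sum_card_fiber_eq_card {ι κ : Type*} [Fintype ι] [Fintype κ] [DecidableEq κ] (f : ι → κ) :
    ∑ b, (#{i | f i = b} : ℝ) = Fintype.card ι := by
  exact_mod_cast (card_eq_sum_card_fiberwise fun i _ => mem_univ (f i)).symm

theorem stmt6 (m d w : ℕ) [NeZero d] (hw : 1 ≤ w) (hm : w * d ≤ m) :
    ∑ ω : Fin m → Fin d,
      ((PMF.uniformOfFintype (Fin m → Fin d)) ω).toReal *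
        (∑ b : Fin d,
          ∑ j ∈ Finset.Icc 1 ((Finset.univ.filter (fun i => ω i = b)).card),
            min ((w : ℝ) / j) 1)
      ≤ w * d * Real.log ((m : ℝ) * Real.exp 1 / (w * d)) := by
  have hd : (0 : ℝ) < d := by exact_mod_cast Nat.pos_of_neZero d
  have hm' : (0 : ℝ) < m := by exact_mod_cast (Nat.mul_pos hw (Nat.pos_of_neZero d)).trans_le hm
  have hc : (w : ℝ) ≤ m / d := by rw [le_div_iff₀ hd]; exact_mod_cast hm
  refine PMF.sum_toReal_mul_le _ fun ω => ?_
  calc ∑ b, expectedUnpruned w #{i | ω i = b}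
      ≤ ∑ b, (w * log (m / d / w) + w / (m / d) * #{i | ω i = b}) :=
        sum_le_sum fun b _ => expectedUnpruned_le hw hc
    _ = w * d * log (m * exp 1 / (w * d)) := by
        rw [sum_add_distrib, sum_const, ← mul_sum, sum_card_fiber_eq_card, card_univ,
          Fintype.card_fin, Fintype.card_fin, nsmul_eq_mul,
          show (m : ℝ) * exp 1 / (w * d) = m / d / w * exp 1 by field_simp,
          log_mul (by positivity) (exp_pos 1).ne', log_exp]
        field_simp
end

section
/- In the deterministic TOP N threshold algorithm, suppose at some point the switch has observed at least N entries with value strictly greater than a threshold t. Then pruning all subsequent entries with value at most t never removes any of the N largest entries of the full stream. -/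
theorem stmt18 (N : ℕ) (t x : ℝ) (l₁ l₂ : List ℝ)
    (hobs : N ≤ l₁.countP (fun v => decide (t < v))) (hx : x ≤ t) :
    N ≤ (l₁ ++ x :: l₂).countP (fun v => decide (x < v)) := by
  rw [List.countP_append]
  calc N ≤ l₁.countP (fun v => decide (t < v)) := hobs
    _ ≤ l₁.countP (fun v => decide (x < v)) := by
        apply List.countP_mono_left
        intro a _ h
        simp only [decide_eq_true_eq] at *
        linarith
    _ ≤ _ := Nat.le_add_right _ _
end
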